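/- Let β be a root of the root pairing. Then for every f ∈ ℤ[M] one has f = T_β^1(f) + (1 − e^{−β})·T_β^0(f); equivalently, as ℤ-linear endomorphisms of ℤ[M], the identity map equals T_β^1 plus multiplication by (1 − e^{−β}) composed with T_β^0. In particular, for every weight λ ∈ M, e^λ = e^{s_β λ} + (1 − e^{−β})·T_β^0(e^λ). -/

import Mathlib

/-!
Multiplication by `1 - e^{-β}` telescopes each geometric string occurring in `T_β^0(e^λ)`:
`(1 - e^{-β}) T_β^0(e^λ) = e^λ - e^{λ - ⟨λ, β^∨⟩ β} = e^λ - e^{s_β λ}` whatever the sign of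
`⟨λ, β^∨⟩`. Both sides of the operator identity are `ℤ`-linear, so checking it on the basis
`e^λ` suffices.
-/

/-- The basis element `e^λ` of the group algebra `ℤ[M]`. -/
noncomputable def expWeight {M : Type*} [AddCommGroup M] (lam : M) :
    AddMonoidAlgebra ℤ M :=
  AddMonoidAlgebra.single lam 1

/-- The value of the Demazure operator `T_β^0` on the basis element `e^λ`,
for the root `β = P.root i`. -/
noncomputable def demazureTerm {ι M N : Type*} [AddCommGroup M] [AddCommGroup N]
    (P : RootPairing ι ℤ M N) (i : ι) (lam : M) : AddMonoidAlgebra ℤ M :=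
  if 0 < P.coroot' i lam then
    ∑ j ∈ Finset.range (P.coroot' i lam).toNat, expWeight (lam - (j : ℤ) • P.root i)
  else if P.coroot' i lam < 0 then
    -∑ j ∈ Finset.Icc 1 (-(P.coroot' i lam)).toNat, expWeight (lam + (j : ℤ) • P.root i)
  else 0

/-- The Demazure operator `T_β^0 : ℤ[M] → ℤ[M]` for the root `β = P.root i`. -/
noncomputable def TZero {ι M N : Type*} [AddCommGroup M] [AddCommGroup N]
    (P : RootPairing ι ℤ M N) (i : ι) :
    AddMonoidAlgebra ℤ M →ₗ[ℤ] AddMonoidAlgebra ℤ M :=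
  (Finsupp.lift (AddMonoidAlgebra ℤ M) ℤ M (demazureTerm P i)) ∘ₗ
    (AddMonoidAlgebra.coeffLinearEquiv ℤ).toLinearMap

/-- The operator `T_β^1 : ℤ[M] → ℤ[M]`, `e^λ ↦ e^{s_β λ}`, for the root `β = P.root i`. -/
noncomputable def TOne {ι M N : Type*} [AddCommGroup M] [AddCommGroup N]
    (P : RootPairing ι ℤ M N) (i : ι) :
    AddMonoidAlgebra ℤ M →ₗ[ℤ] AddMonoidAlgebra ℤ M :=
  (Finsupp.lift (AddMonoidAlgebra ℤ M) ℤ M (fun lam => expWeight (P.reflection i lam))) ∘ₗ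
    (AddMonoidAlgebra.coeffLinearEquiv ℤ).toLinearMap

section expWeight

variable {M : Type*} [AddCommGroup M]

lemma expWeight_add (a b : M) : expWeight (a + b) = expWeight a * expWeight b := by
  simp [expWeight, AddMonoidAlgebra.single_mul_single]

lemma one_sub_expWeight_neg_mul (a b : M) :
    (1 - expWeight (-b)) * expWeight a = expWeight a - expWeight (a - b) := by
  rw [sub_mul, one_mul, ← expWeight_add, neg_add_eq_sub]

lemma one_sub_expWeight_neg_mul_sum_range (lam b : M) (m : ℕ) :
    (1 - expWeight (-b)) * ∑ j ∈ Finset.range m, expWeight (lam - (j : ℤ) • b) =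
      expWeight lam - expWeight (lam - (m : ℤ) • b) := by
  let f : ℕ → AddMonoidAlgebra ℤ M := fun j => expWeight (lam - (j : ℤ) • b)
  calc (1 - expWeight (-b)) * ∑ j ∈ Finset.range m, f j
      = ∑ j ∈ Finset.range m, (f j - f (j + 1)) := by
        rw [Finset.mul_sum]
        refine Finset.sum_congr rfl fun j _ => ?_
        rw [one_sub_expWeight_neg_mul]
        congr 2
        push_cast
        module
    _ = f 0 - f m := Finset.sum_range_sub' f m
    _ = expWeight lam - expWeight (lam - (m : ℤ) • b) := by simp [f]

lemma one_sub_expWeight_neg_mul_sum_Icc (lam b : M) (m : ℕ) :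
    (1 - expWeight (-b)) * ∑ j ∈ Finset.Icc 1 m, expWeight (lam + (j : ℤ) • b) =
      expWeight (lam + (m : ℤ) • b) - expWeight lam := by
  let f : ℕ → AddMonoidAlgebra ℤ M := fun j => expWeight (lam + (j : ℤ) • b)
  calc (1 - expWeight (-b)) * ∑ j ∈ Finset.Icc 1 m, f j
      = (1 - expWeight (-b)) * ∑ j ∈ Finset.range m, f (j + 1) := by
        rw [← Finset.Ico_add_one_right_eq_Icc, Finset.sum_Ico_eq_sum_range, add_tsub_cancel_right]
        simp only [add_comm 1]
    _ = ∑ j ∈ Finset.range m, (f (j + 1) - f j) := by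
        rw [Finset.mul_sum]
        refine Finset.sum_congr rfl fun j _ => ?_
        rw [one_sub_expWeight_neg_mul]
        congr 2
        push_cast
        module
    _ = f m - f 0 := Finset.sum_range_sub f m
    _ = expWeight (lam + (m : ℤ) • b) - expWeight lam := by simp [f]

end expWeight

section RootPairing

variable {ι M N : Type*} [AddCommGroup M] [AddCommGroup N] (P : RootPairing ι ℤ M N) (i : ι)

lemma TZero_expWeight (lam : M) : TZero P i (expWeight lam) = demazureTerm P i lam := by
  simp [TZero, expWeight]

lemma TOne_expWeight (lam : M) :
    TOne P i (expWeight lam) = expWeight (P.reflection i lam) := by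
  simp [TOne, expWeight]

lemma one_sub_expWeight_neg_root_mul_demazureTerm (lam : M) :
    (1 - expWeight (-P.root i)) * demazureTerm P i lam =
      expWeight lam - expWeight (P.reflection i lam) := by
  have hrefl : P.reflection i lam = lam - P.coroot' i lam • P.root i :=
    P.reflection_apply (i := i) lam
  unfold demazureTerm
  split_ifs with hpos hneg
  · rw [one_sub_expWeight_neg_mul_sum_range, Int.toNat_of_nonneg hpos.le, hrefl]
  · rw [mul_neg, one_sub_expWeight_neg_mul_sum_Icc, Int.toNat_of_nonneg (by omega), hrefl,
      neg_smul, ← sub_eq_add_neg, neg_sub]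
  · rw [hrefl, le_antisymm (not_lt.mp hpos) (not_lt.mp hneg), zero_smul, sub_zero, mul_zero,
      sub_self]

lemma TOne_add_mulLeft_comp_TZero :
    TOne P i + LinearMap.mulLeft ℤ (1 - expWeight (-P.root i)) ∘ₗ TZero P i = LinearMap.id := by
  refine AddMonoidAlgebra.lhom_ext' fun lam => LinearMap.ext_ring ?_
  change TOne P i (expWeight lam) + (1 - expWeight (-P.root i)) * TZero P i (expWeight lam) =
    expWeight lam
  rw [TOne_expWeight, TZero_expWeight, one_sub_expWeight_neg_root_mul_demazureTerm,
    add_sub_cancel]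

end RootPairing

theorem demazure_decomposition_general
    {ι M N : Type*} [AddCommGroup M]
    [AddCommGroup N] (P : RootPairing ι ℤ M N) (i : ι) :
    (∀ f : AddMonoidAlgebra ℤ M,
      f = TOne P i f + (1 - expWeight (-(P.root i))) * TZero P i f) ∧
    (∀ lam : M,
      expWeight lam = expWeight (P.reflection i lam)
        + (1 - expWeight (-(P.root i))) * TZero P i (expWeight lam)) := by
  have hf : ∀ f : AddMonoidAlgebra ℤ M,
      f = TOne P i f + (1 - expWeight (-(P.root i))) * TZero P i f :=
    fun f => (LinearMap.congr_fun (TOne_add_mulLeft_comp_TZero P i) f).symm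
  exact ⟨hf, fun lam => by rw [← TOne_expWeight]; exact hf _⟩

/-- For a root `β = P.root i`, every `f ∈ ℤ[M]` satisfies
`f = T_β^1(f) + (1 - e^{-β}) * T_β^0(f)`; in particular, for every weight `λ`,
`e^λ = e^{s_β λ} + (1 - e^{-β}) * T_β^0(e^λ)`. -/
theorem demazure_decomposition
    {ι M N : Type*} [AddCommGroup M] [Module.Free ℤ M] [Module.Finite ℤ M]
    [AddCommGroup N] (P : RootPairing ι ℤ M N) (i : ι) :
    (∀ f : AddMonoidAlgebra ℤ M,
      f = TOne P i f + (1 - expWeight (-(P.root i))) * TZero P i f) ∧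
    (∀ lam : M,
      expWeight lam = expWeight (P.reflection i lam)
        + (1 - expWeight (-(P.root i))) * TZero P i (expWeight lam)) :=
  demazure_decomposition_general P i
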